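/- For every integer n ≥ 1 and every real x > 0, I_{n−1}(x)·I_{n+1}(x) > I_n(x)² − (2/x)·I_n(x)·I_{n+1}(x). -/

import Mathlib

/-- The modified Bessel function of the first kind of (nonnegative integer) order `n`:
`I_n(x) = (x/2)^n * ∑_{k=0}^∞ (x/2)^{2k} / (k! (n+k)!)`. -/
noncomputable def besselI (n : ℕ) (x : ℝ) : ℝ :=
  (x / 2) ^ n * ∑' k : ℕ, (x / 2) ^ (2 * k) / ((Nat.factorial k : ℝ) * (Nat.factorial (n + k) : ℝ))

/-- Auxiliary: the coefficient sequence of the Bessel series. -/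
noncomputable def bb (y : ℝ) (p k : ℕ) : ℝ :=
  y ^ (2 * k) / ((Nat.factorial k : ℝ) * (Nat.factorial (p + k) : ℝ))

lemma bb_nonneg (y : ℝ) (p k : ℕ) : 0 ≤ bb y p k := by
  unfold bb; rw [pow_mul]; positivity

lemma bb_summable_norm (y : ℝ) (p : ℕ) : Summable fun k => ‖bb y p k‖ := by
  refine (Real.summable_pow_div_factorial (y ^ 2)).of_nonneg_of_le
    (fun k => norm_nonneg _) (fun k => ?_)
  have h1 : ‖bb y p k‖ = (y ^ 2) ^ k / ((Nat.factorial k : ℝ) * (Nat.factorial (p + k) : ℝ)) := by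
    rw [Real.norm_eq_abs, bb, pow_mul, abs_div, abs_pow, abs_of_nonneg (sq_nonneg y),
      abs_of_pos (by positivity)]
  rw [h1]
  have h3 : (1 : ℝ) ≤ ((p + k).factorial : ℝ) := by exact_mod_cast (p + k).factorial_pos
  have h4 : (0 : ℝ) < (k.factorial : ℝ) := by exact_mod_cast k.factorial_pos
  have h2 : (Nat.factorial k : ℝ) ≤ (Nat.factorial k : ℝ) * (Nat.factorial (p + k) : ℝ) := by
    nlinarith
  exact div_le_div_of_nonneg_left (by positivity) (by positivity) h2

lemma bb_summable (y : ℝ) (p : ℕ) : Summable fun k => bb y p k :=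
  (bb_summable_norm y p).of_norm

set_option maxHeartbeats 1000000 in
lemma aux (P Q A B K L u v : ℝ) (hA : A ≠ 0) (hB : B ≠ 0) (hK : K ≠ 0) (hL : L ≠ 0)
    (hu : u ≠ 0) (hv : v ≠ 0) (hu1 : u + 1 ≠ 0) (hv1 : v + 1 ≠ 0) :
    (P / (A * K) * (Q / (B * ((v + 1) * (v * L))))
      + P / (A * (u * K)) * (Q / (B * ((v + 1) * (v * L))))
      - P / (A * (u * K)) * (Q / (B * (v * L))))
    + (Q / (B * L) * (P / (A * ((u + 1) * (u * K))))
      + Q / (B * (v * L)) * (P / (A * ((u + 1) * (u * K))))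
      - Q / (B * (v * L)) * (P / (A * (u * K))))
    = P * Q * (u - v) ^ 2 / (A * B * (u * K) * (v * L) * (u + 1) * (v + 1)) := by
  field_simp
  ring

lemma fact1 (m k : ℕ) : ((m + 1 + k).factorial : ℝ)
    = ((m : ℝ) + k + 1) * ((m + k).factorial : ℝ) := by
  rw [show m + 1 + k = (m + k) + 1 by omega, Nat.factorial_succ]
  push_cast; ring

lemma fact2 (m k : ℕ) : ((m + 2 + k).factorial : ℝ)
    = ((m : ℝ) + k + 1 + 1) * (((m : ℝ) + k + 1) * ((m + k).factorial : ℝ)) := by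
  rw [show m + 2 + k = ((m + k) + 1) + 1 by omega, Nat.factorial_succ, Nat.factorial_succ]
  push_cast; ring

lemma bb_key (y : ℝ) (m k l : ℕ) :
    (bb y m k * bb y (m + 2) l + bb y (m + 1) k * bb y (m + 2) l
        - bb y (m + 1) k * bb y (m + 1) l)
      + (bb y m l * bb y (m + 2) k + bb y (m + 1) l * bb y (m + 2) k
        - bb y (m + 1) l * bb y (m + 1) k)
    = y ^ (2 * k) * y ^ (2 * l) * ((k : ℝ) - l) ^ 2 /
      ((Nat.factorial k : ℝ) * (Nat.factorial l : ℝ)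
        * (Nat.factorial (m + 1 + k) : ℝ) * (Nat.factorial (m + 1 + l) : ℝ)
        * ((m : ℝ) + 2 + k) * ((m : ℝ) + 2 + l)) := by
  have ek1 : bb y (m + 1) k
      = y ^ (2 * k) / ((k.factorial : ℝ) * (((m : ℝ) + k + 1) * ((m + k).factorial : ℝ))) := by
    unfold bb; rw [fact1]
  have ek2 : bb y (m + 2) k
      = y ^ (2 * k) / ((k.factorial : ℝ)
          * ((((m : ℝ) + k + 1) + 1) * (((m : ℝ) + k + 1) * ((m + k).factorial : ℝ)))) := by
    unfold bb; rw [fact2]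
  have el1 : bb y (m + 1) l
      = y ^ (2 * l) / ((l.factorial : ℝ) * (((m : ℝ) + l + 1) * ((m + l).factorial : ℝ))) := by
    unfold bb; rw [fact1]
  have el2 : bb y (m + 2) l
      = y ^ (2 * l) / ((l.factorial : ℝ)
          * ((((m : ℝ) + l + 1) + 1) * (((m : ℝ) + l + 1) * ((m + l).factorial : ℝ)))) := by
    unfold bb; rw [fact2]
  have ek0 : bb y m k = y ^ (2 * k) / ((k.factorial : ℝ) * ((m + k).factorial : ℝ)) := rfl
  have el0 : bb y m l = y ^ (2 * l) / ((l.factorial : ℝ) * ((m + l).factorial : ℝ)) := rfl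
  rw [ek0, ek1, ek2, el0, el1, el2, fact1 m k, fact1 m l,
    show ((m : ℝ) + 2 + k) = ((m : ℝ) + k + 1) + 1 by ring,
    show ((m : ℝ) + 2 + l) = ((m : ℝ) + l + 1) + 1 by ring,
    show ((k : ℝ) - l) = (((m : ℝ) + k + 1) - ((m : ℝ) + l + 1)) by ring]
  exact aux _ _ _ _ _ _ _ _
    (Nat.cast_ne_zero.mpr k.factorial_ne_zero) (Nat.cast_ne_zero.mpr l.factorial_ne_zero)
    (Nat.cast_ne_zero.mpr (m + k).factorial_ne_zero) (Nat.cast_ne_zero.mpr (m + l).factorial_ne_zero)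
    (by positivity) (by positivity) (by positivity) (by positivity)

/-- For every integer `n ≥ 1` and real `x > 0`,
`I_{n-1}(x)·I_{n+1}(x) > I_n(x)² − (2/x)·I_n(x)·I_{n+1}(x)`. -/
theorem besselI_reverse_turan (n : ℕ) (hn : 1 ≤ n) (x : ℝ) (hx : 0 < x) :
    besselI (n - 1) x * besselI (n + 1) x
      > besselI n x ^ 2 - (2 / x) * besselI n x * besselI (n + 1) x := by
  obtain ⟨m, rfl⟩ : ∃ m, n = m + 1 := ⟨n - 1, (Nat.succ_pred_eq_of_pos hn).symm⟩
  set y : ℝ := x / 2 with hy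
  have hy0 : 0 < y := by positivity
  have hbess : ∀ p : ℕ, besselI p x = y ^ p * ∑' k, bb y p k := fun p => rfl
  -- Cauchy products
  have hcauchy : ∀ p q : ℕ, (∑' k, bb y p k) * (∑' k, bb y q k)
      = ∑' M, ∑ kl ∈ Finset.HasAntidiagonal.antidiagonal M, bb y p kl.1 * bb y q kl.2 := fun p q =>
    tsum_mul_tsum_eq_tsum_sum_antidiagonal_of_summable_norm
      (bb_summable_norm y p) (bb_summable_norm y q)
  have hS : ∀ p q : ℕ,
      Summable fun M => ∑ kl ∈ Finset.HasAntidiagonal.antidiagonal M, bb y p kl.1 * bb y q kl.2 := fun p q =>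
    summable_sum_mul_antidiagonal_of_summable_norm'
      (bb_summable_norm y p) (bb_summable y p) (bb_summable_norm y q) (bb_summable y q)
  -- the combined coefficient function
  set g : ℕ → ℝ := fun M => ∑ kl ∈ Finset.HasAntidiagonal.antidiagonal M,
    (bb y m kl.1 * bb y (m + 2) kl.2 + bb y (m + 1) kl.1 * bb y (m + 2) kl.2
      - bb y (m + 1) kl.1 * bb y (m + 1) kl.2) with hg
  have hg_eq : ∀ M, g M
      = (∑ kl ∈ Finset.HasAntidiagonal.antidiagonal M, bb y m kl.1 * bb y (m + 2) kl.2)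
        + (∑ kl ∈ Finset.HasAntidiagonal.antidiagonal M, bb y (m + 1) kl.1 * bb y (m + 2) kl.2)
        - ∑ kl ∈ Finset.HasAntidiagonal.antidiagonal M, bb y (m + 1) kl.1 * bb y (m + 1) kl.2 := by
    intro M
    rw [hg]
    rw [← Finset.sum_add_distrib, ← Finset.sum_sub_distrib]
  have hg_summable : Summable g := by
    have := ((hS m (m + 2)).add (hS (m + 1) (m + 2))).sub (hS (m + 1) (m + 1))
    exact this.congr fun M => (hg_eq M).symm
  -- nonnegativity of g
  have hg_nonneg : ∀ M, 0 ≤ g M := by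
    intro M
    set h : ℕ × ℕ → ℝ := fun kl =>
      bb y m kl.1 * bb y (m + 2) kl.2 + bb y (m + 1) kl.1 * bb y (m + 2) kl.2
        - bb y (m + 1) kl.1 * bb y (m + 1) kl.2 with hh
    have hswap : ∑ kl ∈ Finset.HasAntidiagonal.antidiagonal M, h kl.swap
        = ∑ kl ∈ Finset.HasAntidiagonal.antidiagonal M, h kl := Finset.Nat.sum_antidiagonal_swap
    have hdouble : g M + g M = ∑ kl ∈ Finset.HasAntidiagonal.antidiagonal M, (h kl + h kl.swap) := by
      rw [Finset.sum_add_distrib, hswap, hg]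
    have hterm : ∀ kl : ℕ × ℕ, 0 ≤ h kl + h kl.swap := by
      intro ⟨k, l⟩
      have := bb_key y m k l
      simp only [hh, Prod.swap_prod_mk]
      rw [this]
      have h2k : (0:ℝ) ≤ y ^ (2 * k) := by rw [pow_mul]; positivity
      have h2l : (0:ℝ) ≤ y ^ (2 * l) := by rw [pow_mul]; positivity
      positivity
    have : 0 ≤ g M + g M := hdouble ▸ Finset.sum_nonneg fun kl _ => hterm kl
    linarith
  -- positivity at M = 1
  have hg_one : 0 < g 1 := by
    have h1 : g 1 = (bb y m 0 * bb y (m + 2) 1 + bb y (m + 1) 0 * bb y (m + 2) 1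
        - bb y (m + 1) 0 * bb y (m + 1) 1)
      + (bb y m 1 * bb y (m + 2) 0 + bb y (m + 1) 1 * bb y (m + 2) 0
        - bb y (m + 1) 1 * bb y (m + 1) 0) := by
      simp only [hg]
      rw [show (Finset.HasAntidiagonal.antidiagonal 1 : Finset (ℕ × ℕ)) = {(0, 1), (1, 0)} by decide]
      rw [Finset.sum_insert (by decide), Finset.sum_singleton]
    rw [h1, bb_key y m 0 1]
    have : ((0 : ℕ) : ℝ) - ((1 : ℕ) : ℝ) = -1 := by norm_num
    rw [this]
    have h2k : (0:ℝ) < y ^ (2 * 0) := by rw [pow_mul]; positivity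
    have h2l : (0:ℝ) < y ^ (2 * 1) := by rw [pow_mul]; positivity
    positivity
  have htsum_pos : 0 < ∑' M, g M := Summable.tsum_pos hg_summable hg_nonneg 1 hg_one
  -- assemble
  have hsplit : ∑' M, g M
      = (∑' k, bb y m k) * (∑' k, bb y (m + 2) k)
        + (∑' k, bb y (m + 1) k) * (∑' k, bb y (m + 2) k)
        - (∑' k, bb y (m + 1) k) * (∑' k, bb y (m + 1) k) := by
    rw [hcauchy m (m + 2), hcauchy (m + 1) (m + 2), hcauchy (m + 1) (m + 1)]
    rw [← Summable.tsum_add (hS m (m + 2)) (hS (m + 1) (m + 2)),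
      ← Summable.tsum_sub ((hS m (m + 2)).add (hS (m + 1) (m + 2))) (hS (m + 1) (m + 1))]
    exact tsum_congr fun M => hg_eq M
  -- rewrite the goal
  have hmn : m + 1 - 1 = m := by omega
  rw [gt_iff_lt, hmn, hbess m, hbess (m + 1), hbess (m + 2)]
  have hx2 : (2 : ℝ) / x = 1 / y := by
    rw [hy]; field_simp
  rw [hx2]
  set A := ∑' k, bb y m k
  set B := ∑' k, bb y (m + 1) k
  set C := ∑' k, bb y (m + 2) k
  have hyne : y ≠ 0 := ne_of_gt hy0
  have key : y ^ m * A * (y ^ (m + 1 + 1) * C) + 1 / y * (y ^ (m + 1) * B) * (y ^ (m + 1 + 1) * C)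
      - (y ^ (m + 1) * B) ^ 2 = y ^ (2 * m + 2) * (A * C + B * C - B * B) := by
    field_simp
    ring
  have hpow : (0:ℝ) < y ^ (2 * m + 2) := by positivity
  have : 0 < y ^ (2 * m + 2) * (A * C + B * C - B * B) := by
    rw [hsplit] at htsum_pos
    exact mul_pos hpow htsum_pos
  nlinarith [this, key]
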